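/- Let n ≥ 2 be an even integer and let h ∈ QP_m for some m ∈ ℤ^d with m_1 > 0. Then there exists a sublevel component A of h that contains 0, does not contain n·e_1, and is translation respecting of type 0 (i.e. |T_A| > 1 and T_A is totally ordered by inclusion). -/

import Mathlib

namespace P3C

def latticeGraph (d : ℕ) : SimpleGraph (Fin d → ℤ) where
  Adj v w := ∃ i, (w i = v i + 1 ∨ w i = v i - 1) ∧ ∀ j, j ≠ i → w j = v j
  symm := ⟨by
    rintro v w ⟨i, h1, h2⟩
    exact ⟨i, by omega, fun j hj => (h2 j hj).symm⟩⟩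
  loopless := ⟨by
    rintro v ⟨i, h1, _⟩
    omega⟩

def vplus (d : ℕ) (U : Set (Fin d → ℤ)) : Set (Fin d → ℤ) :=
  {u | u ∈ U ∨ ∃ w ∈ U, (latticeGraph d).Adj u w}

def vminus (d : ℕ) (U : Set (Fin d → ℤ)) : Set (Fin d → ℤ) :=
  {u | u ∈ U ∧ ∀ w, (latticeGraph d).Adj u w → w ∈ U}

def inBdry (d : ℕ) (U : Set (Fin d → ℤ)) : Set (Fin d → ℤ) := U \ vminus d U

def outBdry (d : ℕ) (U : Set (Fin d → ℤ)) : Set (Fin d → ℤ) := vplus d U \ U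

def ConnectedIn {V : Type*} (G : SimpleGraph V) (S : Set V) : Prop := (G.induce S).Connected

def BiConnected (d : ℕ) (U : Set (Fin d → ℤ)) : Prop :=
  U ≠ ∅ ∧ U ≠ Set.univ ∧ ConnectedIn (latticeGraph d) U ∧ ConnectedIn (latticeGraph d) Uᶜ

def edgeBdry (d : ℕ) (U : Set (Fin d → ℤ)) : Set ((Fin d → ℤ) × (Fin d → ℤ)) :=
  {p | (latticeGraph d).Adj p.1 p.2 ∧ ((p.1 ∈ U ∧ p.2 ∉ U) ∨ (p.2 ∈ U ∧ p.1 ∉ U))}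

def IsFourCycle (d : ℕ) (v00 v01 v11 v10 : Fin d → ℤ) : Prop :=
  (latticeGraph d).Adj v00 v01 ∧ (latticeGraph d).Adj v01 v11 ∧
  (latticeGraph d).Adj v11 v10 ∧ (latticeGraph d).Adj v10 v00 ∧ v00 ≠ v11 ∧ v01 ≠ v10

def BoundaryDisjoint (d : ℕ) (U1 U2 : Set (Fin d → ℤ)) : Prop :=
  edgeBdry d U1 ∩ edgeBdry d U2 = ∅ ∧
  ¬ ∃ v00 v01 v11 v10, IsFourCycle d v00 v01 v11 v10 ∧
    v00 ∈ U1ᶜ ∩ U2ᶜ ∧ v01 ∈ U1ᶜ ∩ U2 ∧ v11 ∈ U1 ∩ U2 ∧ v10 ∈ U1 ∩ U2ᶜ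

def translates (n d : ℕ) (U : Set (Fin d → ℤ)) : Set (Set (Fin d → ℤ)) :=
  {W | ∃ x : Fin d → ℤ, (∀ i, (n : ℤ) ∣ x i) ∧ W = (fun u => u + x) '' U}

def TranslationRespecting (n d : ℕ) (U : Set (Fin d → ℤ)) : Prop :=
  BiConnected d U ∧
  ∀ U1 ∈ translates n d U, ∀ U2 ∈ translates n d U, U1 ≠ U2 → BoundaryDisjoint d U1 U2

def TypeZero (n d : ℕ) (U : Set (Fin d → ℤ)) : Prop :=
  TranslationRespecting n d U ∧ (translates n d U).Nontrivial ∧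
  ∀ A ∈ translates n d U, ∀ B ∈ translates n d U, A ⊆ B ∨ B ⊆ A

noncomputable def setDist (d : ℕ) (A B : Set (Fin d → ℤ)) : ℕ :=
  sInf {k | ∃ a ∈ A, ∃ b ∈ B, (latticeGraph d).dist a b = k}

def IsLatticeHHF (d : ℕ) (h : (Fin d → ℤ) → ℤ) : Prop :=
  ∀ v w, (latticeGraph d).Adj v w → |h v - h w| = 1

def homZeroLattice (d : ℕ) : Set ((Fin d → ℤ) → ℤ) :=
  {h | IsLatticeHHF d h ∧ h 0 = 0}

def IsQP (n d : ℕ) (m : Fin d → ℤ) (h : (Fin d → ℤ) → ℤ) : Prop :=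
  h ∈ homZeroLattice d ∧ ∀ (v : Fin d → ℤ) (i : Fin d), h (v + Pi.single i (n : ℤ)) = h v + m i

def QPset (n d : ℕ) : Set ((Fin d → ℤ) → ℤ) :=
  {h | ∃ m : Fin d → ℤ, (∀ i, (6 : ℤ) ∣ m i ∧ |m i| ≤ (n : ℤ)) ∧ IsQP n d m h}

def compIn {V : Type*} (G : SimpleGraph V) (S : Set V) (u : V) : Set V :=
  {w | ∃ (hu : u ∈ S) (hw : w ∈ S), (G.induce S).Reachable ⟨u, hu⟩ ⟨w, hw⟩}

def subLL (d : ℕ) (h : (Fin d → ℤ) → ℤ) (k : ℤ) (u : Fin d → ℤ) : Set (Fin d → ℤ) :=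
  compIn (latticeGraph d) {w | h w ≠ k + 1} u

def subLC (d : ℕ) (h : (Fin d → ℤ) → ℤ) (k : ℤ) (u v : Fin d → ℤ) : Set (Fin d → ℤ) :=
  (compIn (latticeGraph d) (subLL d h k u)ᶜ v)ᶜ

def IsSublevelComponent (d : ℕ) (h : (Fin d → ℤ) → ℤ) (A : Set (Fin d → ℤ)) : Prop :=
  ∃ u v k, h u ≤ k ∧ k < h v ∧ A = subLC d h k u v

def sepComps (d : ℕ) (h : (Fin d → ℤ) → ℤ) (u v : Fin d → ℤ) : Set (Set (Fin d → ℤ)) :=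
  {A | IsSublevelComponent d h A ∧ u ∈ A ∧ v ∉ A}

def cycleEdge (d : ℕ) (v00 v01 v11 v10 : Fin d → ℤ) (e : (Fin d → ℤ) × (Fin d → ℤ)) : Prop :=
  ({e.1, e.2} : Set (Fin d → ℤ)) = {v00, v01} ∨ ({e.1, e.2} : Set (Fin d → ℤ)) = {v01, v11} ∨
  ({e.1, e.2} : Set (Fin d → ℤ)) = {v11, v10} ∨ ({e.1, e.2} : Set (Fin d → ℤ)) = {v10, v00}

def bdryGraph (d : ℕ) (U : Set (Fin d → ℤ)) : SimpleGraph (Fin d → ℤ) where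
  Adj u v := u ≠ v ∧ ∃ eu ev, eu ∈ edgeBdry d U ∧ ev ∈ edgeBdry d U ∧
    (u = eu.1 ∨ u = eu.2) ∧ (v = ev.1 ∨ v = ev.2) ∧
    ∃ a b c e, IsFourCycle d a b c e ∧ cycleEdge d a b c e eu ∧ cycleEdge d a b c e ev
  symm := ⟨by
    rintro u v ⟨hne, eu, ev, h1, h2, h3, h4, a, b, c, e, hc, hcu, hcv⟩
    exact ⟨hne.symm, ev, eu, h2, h1, h4, h3, a, b, c, e, hc, hcv, hcu⟩⟩
  loopless := ⟨fun u h => h.1 rfl⟩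

/-! Torus definitions -/

def torusAdj (n d : ℕ) (v w : Fin d → ZMod n) : Prop :=
  ∃ i, (w i = v i + 1 ∨ w i = v i - 1) ∧ ∀ j, j ≠ i → w j = v j

def IsProperColoring (n d : ℕ) (f : (Fin d → ZMod n) → Fin 3) : Prop :=
  ∀ v w, torusAdj n d v w → f v ≠ f w

def torusColorings (n d : ℕ) : Set ((Fin d → ZMod n) → Fin 3) :=
  {f | IsProperColoring n d f}

def colZero (n d : ℕ) : Set ((Fin d → ZMod n) → Fin 3) :=
  {f | IsProperColoring n d f ∧ f 0 = 0}

def IsTorusHHF (n d : ℕ) (h : (Fin d → ZMod n) → ℤ) : Prop :=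
  ∀ v w, torusAdj n d v w → |h v - h w| = 1

def torusHomZero (n d : ℕ) : Set ((Fin d → ZMod n) → ℤ) :=
  {h | IsTorusHHF n d h ∧ h 0 = 0}

noncomputable def cp (n d : ℕ) (par : ℕ) (k : Fin 3) (f : (Fin d → ZMod n) → Fin 3) : ℝ :=
  (Nat.card {v : Fin d → ZMod n | (∑ j, (v j).val) % 2 = par ∧ f v = k} : ℝ) /
  (Nat.card {v : Fin d → ZMod n | (∑ j, (v j).val) % 2 = par} : ℝ)

def latticeProj (n d : ℕ) (v : Fin d → ℤ) : Fin d → ZMod n := fun i => (v i : ZMod n)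

def toCol (n d : ℕ) (h : (Fin d → ℤ) → ℤ) (x : Fin d → ZMod n) : Fin 3 :=
  ⟨(h (fun i => ((x i).val : ℤ)) % 3).toNat, by
    have h1 : (0 : ℤ) ≤ h (fun i => ((x i).val : ℤ)) % 3 := Int.emod_nonneg _ (by norm_num)
    have h2 : h (fun i => ((x i).val : ℤ)) % 3 < 3 := Int.emod_lt_of_pos _ (by norm_num)
    omega⟩

end P3C

/-!
Write `tilt n m w = ∑ i, m i * ⌊w i / n⌋`. Quasi-periodicity makes `h - tilt n m` periodic, hence
bounded by some `M`, and the half-spaces `{tilt ≤ B}`, `{B ≤ tilt}` are connected since `m₁ ≠ 0`.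
So at every level `k` the region `tilt ≤ k - M` lies in one lower level set and the region
`k + M < tilt` in one component of its complement: this gives a sublevel component `C k`
independent of the anchors chosen in those regions. Translation by `x ∈ nℤᵈ` maps `C k` to
`C (k + tilt x)`, and `C` is strictly increasing in `k`, so the translates of `C k` form a chain.
Distinct sublevel components of any height function are boundary disjoint: a common boundary edge,
or a bad 4-cycle, pins both to the same level and the same lower level set. Finally, for the least
`k` with `0 ∈ C k`, the point `n e₁` lies in `C k = C (k - m₁) + n e₁` iff `0 ∈ C (k - m₁)`,
which fails.
-/

namespace P3C

open Relation

section Components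

variable {V V' : Type*} {G : SimpleGraph V} {S T : Set V} {a b u v w : V}

def AdjIn (G : SimpleGraph V) (S : Set V) (p q : V) : Prop :=
  G.Adj p q ∧ p ∈ S ∧ q ∈ S

instance : Std.Symm (AdjIn G S) := ⟨fun _ _ ⟨hpq, hp, hq⟩ => ⟨hpq.symm, hq, hp⟩⟩

lemma AdjIn.mono (hST : S ⊆ T) : AdjIn G S ≤ AdjIn G T :=
  fun _ _ ⟨hpq, hp, hq⟩ => ⟨hpq, hST hp, hST hq⟩

lemma mem_of_reflTransGen_adjIn (hr : ReflTransGen (AdjIn G S) a b) (ha : a ∈ S) : b ∈ S := by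
  induction hr with
  | refl => exact ha
  | tail _ hbc => exact hbc.2.2

lemma induce_reachable_iff {a b : S} :
    (G.induce S).Reachable a b ↔ ReflTransGen (AdjIn G S) a b := by
  rw [SimpleGraph.reachable_iff_reflTransGen]
  refine ⟨ReflTransGen.lift Subtype.val (fun p q hpq => ⟨hpq, p.2, q.2⟩) a b, fun hr => ?_⟩
  suffices ∀ c, ReflTransGen (AdjIn G S) a c → ∀ hc : c ∈ S,
      ReflTransGen (G.induce S).Adj a ⟨c, hc⟩ from this b hr b.2
  intro c hr
  induction hr with
  | refl => exact fun _ => .refl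
  | tail _ hcd ih => exact fun _ => (ih hcd.2.1).tail hcd.1

lemma induce_preconnected_iff :
    (G.induce S).Preconnected ↔ ∀ a ∈ S, ∀ b ∈ S, ReflTransGen (AdjIn G S) a b :=
  ⟨fun hS a ha b hb => induce_reachable_iff.1 (hS ⟨a, ha⟩ ⟨b, hb⟩),
    fun hS a b => induce_reachable_iff.2 (hS a a.2 b b.2)⟩

lemma mem_compIn_iff : w ∈ compIn G S u ↔ u ∈ S ∧ ReflTransGen (AdjIn G S) u w :=
  ⟨fun ⟨hu, _, hr⟩ => ⟨hu, induce_reachable_iff.1 hr⟩,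
    fun ⟨hu, hr⟩ => ⟨hu, mem_of_reflTransGen_adjIn hr hu, induce_reachable_iff.2 hr⟩⟩

lemma compIn_subset : compIn G S u ⊆ S := fun _ ⟨_, hw, _⟩ => hw

lemma mem_compIn_self (hu : u ∈ S) : u ∈ compIn G S u := mem_compIn_iff.2 ⟨hu, .refl⟩

lemma mem_compIn_of_adj (hw : w ∈ compIn G S u) (hwq : G.Adj w v) (hv : v ∈ S) :
    v ∈ compIn G S u :=
  have ⟨hu, hr⟩ := mem_compIn_iff.1 hw
  mem_compIn_iff.2 ⟨hu, hr.tail ⟨hwq, compIn_subset hw, hv⟩⟩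

lemma compIn_eq_of_mem (hw : w ∈ compIn G S u) : compIn G S w = compIn G S u := by
  obtain ⟨hu, hr⟩ := mem_compIn_iff.1 hw
  ext z
  rw [mem_compIn_iff, mem_compIn_iff]
  exact ⟨fun ⟨_, hz⟩ => ⟨hu, hr.trans hz⟩,
    fun ⟨_, hz⟩ => ⟨compIn_subset hw, (symm_of _ hr).trans hz⟩⟩

lemma compIn_mono (hST : S ⊆ T) : compIn G S u ⊆ compIn G T u := fun _ hw =>
  have ⟨hu, hr⟩ := mem_compIn_iff.1 hw
  mem_compIn_iff.2 ⟨hST hu, ReflTransGen.mono (AdjIn.mono hST) _ _ hr⟩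

lemma subset_compIn (hS : (G.induce S).Preconnected) (hST : S ⊆ T) (hu : u ∈ S) :
    S ⊆ compIn G T u := fun w hw =>
  compIn_mono hST (mem_compIn_iff.2 ⟨hu, induce_preconnected_iff.1 hS u hu w hw⟩)

lemma reflTransGen_adjIn_compIn (hw : w ∈ compIn G S u) :
    ReflTransGen (AdjIn G (compIn G S u)) u w := by
  obtain ⟨hu, hr⟩ := mem_compIn_iff.1 hw
  induction hr with
  | refl => exact .refl
  | tail hr hcd ih =>
    exact (ih (mem_compIn_iff.2 ⟨hu, hr⟩)).tail
      ⟨hcd.1, mem_compIn_iff.2 ⟨hu, hr⟩, mem_compIn_iff.2 ⟨hu, hr.tail hcd⟩⟩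

lemma compIn_preconnected : (G.induce (compIn G S u)).Preconnected :=
  induce_preconnected_iff.2 fun _ ha _ hb =>
    (symm_of _ (reflTransGen_adjIn_compIn ha)).trans (reflTransGen_adjIn_compIn hb)

lemma compIn_eq_of_closed (hST : S ⊆ T) (hclosed : ∀ p q, G.Adj p q → p ∈ S → q ∈ T → q ∈ S)
    (hu : u ∈ S) : compIn G T u = compIn G S u := by
  refine Set.Subset.antisymm (fun w hw => ?_) (compIn_mono hST)
  obtain ⟨-, hr⟩ := mem_compIn_iff.1 hw
  refine mem_compIn_iff.2 ⟨hu, ?_⟩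
  clear hw
  induction hr with
  | refl => exact .refl
  | tail _ hcd ih =>
    have hc := mem_of_reflTransGen_adjIn ih hu
    exact ih.tail ⟨hcd.1, hc, hclosed _ _ hcd.1 hc hcd.2.2⟩

lemma exists_adj_mem_not_mem (hG : G.Preconnected) {W : Set V} (ha : a ∈ W) (hb : b ∉ W) :
    ∃ p q, G.Adj p q ∧ p ∈ W ∧ q ∉ W :=
  have ⟨p⟩ := hG a b
  have ⟨d, _, hd₁, hd₂⟩ := p.exists_boundary_dart W ha hb
  ⟨_, _, d.adj, hd₁, hd₂⟩

/-- Each point outside `L` lies in another component of `Lᶜ`, whose boundary edges lead into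
`L`. -/
lemma compl_compIn_compl_preconnected (hG : G.Preconnected) {L : Set V}
    (hL : (G.induce L).Preconnected) (hu : u ∈ L) :
    (G.induce (compIn G Lᶜ v)ᶜ).Preconnected := by
  have hLK : L ⊆ (compIn G Lᶜ v)ᶜ := fun w hw hK => compIn_subset hK hw
  have toL : ∀ w ∈ L, ReflTransGen (AdjIn G (compIn G Lᶜ v)ᶜ) w u := fun w hw =>
    ReflTransGen.mono (AdjIn.mono hLK) _ _ (induce_preconnected_iff.1 hL w hw u hu)
  have key : ∀ w ∈ (compIn G Lᶜ v)ᶜ, ReflTransGen (AdjIn G (compIn G Lᶜ v)ᶜ) w u := by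
    intro w hw
    by_cases hwL : w ∈ L
    · exact toL w hwL
    have hwC : w ∈ compIn G Lᶜ w := mem_compIn_self hwL
    have hCK : compIn G Lᶜ w ⊆ (compIn G Lᶜ v)ᶜ := fun t ht hK =>
      hw ((compIn_eq_of_mem hK).symm.trans (compIn_eq_of_mem ht) ▸ hwC)
    obtain ⟨p, q, hpq, hp, hq⟩ := exists_adj_mem_not_mem hG hwC
      (fun hu' => (compIn_subset hu' : u ∈ Lᶜ) hu)
    have hqL : q ∈ L := by_contra fun hqL => hq (mem_compIn_of_adj hp hpq hqL)
    exact ((ReflTransGen.mono (AdjIn.mono hCK) _ _ (reflTransGen_adjIn_compIn hp)).tail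
      ⟨hpq, hCK hp, hLK hqL⟩).trans (toL q hqL)
  exact induce_preconnected_iff.2 fun a ha b hb => (key a ha).trans (symm_of _ (key b hb))

lemma image_compIn_subset {G' : SimpleGraph V'} (e : G ≃g G') :
    e '' compIn G S u ⊆ compIn G' (e '' S) (e u) := by
  rintro _ ⟨w, hw, rfl⟩
  obtain ⟨hu, hr⟩ := mem_compIn_iff.1 hw
  refine mem_compIn_iff.2
    ⟨Set.mem_image_of_mem e hu, ReflTransGen.lift e (fun p q hpq => ?_) _ _ hr⟩
  exact ⟨e.map_adj_iff.2 hpq.1, Set.mem_image_of_mem e hpq.2.1, Set.mem_image_of_mem e hpq.2.2⟩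

lemma compIn_image_iso {G' : SimpleGraph V'} (e : G ≃g G') :
    compIn G' (e '' S) (e u) = e '' compIn G S u := by
  refine Set.Subset.antisymm (fun w hw => ⟨e.symm w, ?_, e.apply_symm_apply w⟩)
    (image_compIn_subset e)
  simpa [Set.image_image] using image_compIn_subset e.symm ⟨w, hw, rfl⟩

end Components

section Lattice

variable {d : ℕ}

lemma adj_update_add_one (a : Fin d → ℤ) (i : Fin d) (t : ℤ) :
    (latticeGraph d).Adj (Function.update a i t) (Function.update a i (t + 1)) :=
  ⟨i, Or.inl (by simp), fun j hj => by simp [hj]⟩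

lemma reflTransGen_update (a : Fin d → ℤ) (i : Fin d) (t : ℤ) :
    ReflTransGen (latticeGraph d).Adj a (Function.update a i t) := by
  obtain ⟨s, rfl⟩ : ∃ s, t = a i + s := ⟨t - a i, by ring⟩
  induction s using Int.induction_on with
  | zero => simpa using ReflTransGen.refl
  | succ s ih => exact ih.tail (by rw [← add_assoc]; exact adj_update_add_one a i _)
  | pred s ih =>
    refine ih.tail (SimpleGraph.Adj.symm ?_)
    simpa [add_sub_assoc'] using adj_update_add_one a i (a i + (-s - 1))

lemma latticeGraph_preconnected : (latticeGraph d).Preconnected := by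
  classical
  intro a b
  rw [SimpleGraph.reachable_iff_reflTransGen]
  have key : ∀ s : Finset (Fin d), ReflTransGen (latticeGraph d).Adj a (s.piecewise b a) := by
    intro s
    induction s using Finset.induction_on with
    | empty => simpa using ReflTransGen.refl
    | insert j s _ ih => rw [Finset.piecewise_insert]; exact ih.trans (reflTransGen_update _ _ _)
  simpa using key Finset.univ

lemma adj_add_single (w : Fin d → ℤ) (j : Fin d) {σ : ℤ} (hσ : σ = 1 ∨ σ = -1) :
    (latticeGraph d).Adj w (w + Pi.single j σ) :=
  ⟨j, by simp only [Pi.add_apply, Pi.single_eq_same]; omega,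
    fun i hi => by simp [Pi.single_eq_of_ne hi]⟩

def translateIso (x : Fin d → ℤ) : latticeGraph d ≃g latticeGraph d where
  toEquiv := Equiv.addRight x
  map_rel_iff' {a b} := by
    simp only [Equiv.coe_addRight, latticeGraph, Pi.add_apply]
    constructor <;> rintro ⟨i, hi, hj⟩ <;>
      exact ⟨i, by omega, fun j hji => by have := hj j hji; omega⟩

end Lattice

section HeightFunction

variable {d : ℕ} {h : (Fin d → ℤ) → ℤ} {k k₁ k₂ : ℤ} {a b₁ b₂ c p q u v u₁ v₁ u₂ v₂ w : Fin d → ℤ}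

lemma IsLatticeHHF.height_adj (hh : IsLatticeHHF d h) (hpq : (latticeGraph d).Adj p q) :
    h q = h p + 1 ∨ h q = h p - 1 := by
  have := hh p q hpq
  rw [abs_eq zero_le_one] at this
  omega

lemma subLL_eq_compIn_le (hh : IsLatticeHHF d h) (hu : h u ≤ k) :
    subLL d h k u = compIn (latticeGraph d) {w | h w ≤ k} u := by
  refine compIn_eq_of_closed (fun w (hw : h w ≤ k) => show h w ≠ k + 1 by omega)
    (fun p q hpq (hp : h p ≤ k) (hq : h q ≠ k + 1) => show h q ≤ k from ?_) hu
  have := hh.height_adj hpq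
  omega

lemma height_le_of_mem_subLL (hh : IsLatticeHHF d h) (hu : h u ≤ k) (hw : w ∈ subLL d h k u) :
    h w ≤ k := by
  rw [subLL_eq_compIn_le hh hu] at hw
  exact (compIn_subset hw : w ∈ {w | h w ≤ k})

lemma mem_subLL_self (hu : h u ≤ k) : u ∈ subLL d h k u :=
  mem_compIn_self (show h u ≠ k + 1 by omega)

lemma subLL_mono (hh : IsLatticeHHF d h) (hu : h u ≤ k₁) (hk : k₁ ≤ k₂) :
    subLL d h k₁ u ⊆ subLL d h k₂ u := by
  rw [subLL_eq_compIn_le hh hu, subLL_eq_compIn_le hh (hu.trans hk)]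
  exact compIn_mono fun w (hw : h w ≤ k₁) => show h w ≤ k₂ from hw.trans hk

lemma mem_subLC : w ∈ subLC d h k u v ↔ w ∉ compIn (latticeGraph d) (subLL d h k u)ᶜ v :=
  Iff.rfl

lemma subLL_subset_subLC : subLL d h k u ⊆ subLC d h k u v := fun _ hw hK => compIn_subset hK hw

lemma not_mem_subLC_self (hh : IsLatticeHHF d h) (hu : h u ≤ k) (hv : k < h v) :
    v ∉ subLC d h k u v :=
  not_not.2 (mem_compIn_self fun hvL => (height_le_of_mem_subLL hh hu hvL).not_gt hv)

lemma subLC_boundary_edge (hh : IsLatticeHHF d h) (hu : h u ≤ k) (hp : p ∈ subLC d h k u v)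
    (hq : q ∉ subLC d h k u v) (hpq : (latticeGraph d).Adj p q) :
    p ∈ subLL d h k u ∧ h p = k ∧ h q = k + 1 := by
  rw [mem_subLC, not_not] at hq
  have hpL : p ∈ subLL d h k u := by_contra fun hpL => hp (mem_compIn_of_adj hq hpq.symm hpL)
  have hq1 : h q = k + 1 := by_contra fun hq1 => compIn_subset hq (mem_compIn_of_adj hpL hpq hq1)
  have := hh.height_adj hpq
  have := height_le_of_mem_subLL hh hu hpL
  exact ⟨hpL, by omega, hq1⟩

lemma subLC_mono (hh : IsLatticeHHF d h) (hu : h u ≤ k₁) (hk : k₁ ≤ k₂) :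
    subLC d h k₁ u v ⊆ subLC d h k₂ u v :=
  Set.compl_subset_compl.2 (compIn_mono (Set.compl_subset_compl.2 (subLL_mono hh hu hk)))

lemma subLC_eq_of_mem_of_not_mem (ha₁ : a ∈ subLL d h k u₁) (ha₂ : a ∈ subLL d h k u₂)
    (hc₁ : c ∉ subLC d h k u₁ v₁) (hc₂ : c ∉ subLC d h k u₂ v₂) :
    subLC d h k u₁ v₁ = subLC d h k u₂ v₂ := by
  have hL : subLL d h k u₁ = subLL d h k u₂ :=
    (compIn_eq_of_mem ha₁).symm.trans (compIn_eq_of_mem ha₂)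
  rw [mem_subLC, not_not] at hc₁ hc₂
  rw [hL] at hc₁
  rw [subLC, subLC, hL, ← compIn_eq_of_mem hc₁, ← compIn_eq_of_mem hc₂]

/-- The boundary edges at `a` put `a` into both lower level sets, at the common level `h a`. -/
lemma subLC_eq_of_touch (hh : IsLatticeHHF d h) (hu₁ : h u₁ ≤ k₁) (hu₂ : h u₂ ≤ k₂)
    (ha₁ : a ∈ subLC d h k₁ u₁ v₁) (ha₂ : a ∈ subLC d h k₂ u₂ v₂)
    (hb₁ : b₁ ∉ subLC d h k₁ u₁ v₁) (hb₂ : b₂ ∉ subLC d h k₂ u₂ v₂)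
    (hab₁ : (latticeGraph d).Adj a b₁) (hab₂ : (latticeGraph d).Adj a b₂)
    (hc₁ : c ∉ subLC d h k₁ u₁ v₁) (hc₂ : c ∉ subLC d h k₂ u₂ v₂) :
    subLC d h k₁ u₁ v₁ = subLC d h k₂ u₂ v₂ := by
  obtain ⟨hL₁, hk₁, -⟩ := subLC_boundary_edge hh hu₁ ha₁ hb₁ hab₁
  obtain ⟨hL₂, hk₂, -⟩ := subLC_boundary_edge hh hu₂ ha₂ hb₂ hab₂
  obtain rfl : k₁ = k₂ := hk₁.symm.trans hk₂
  exact subLC_eq_of_mem_of_not_mem hL₁ hL₂ hc₁ hc₂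

lemma subLC_level_eq (hh : IsLatticeHHF d h) (hu₁ : h u₁ ≤ k₁) (hv₁ : k₁ < h v₁)
    (hu₂ : h u₂ ≤ k₂) (heq : subLC d h k₁ u₁ v₁ = subLC d h k₂ u₂ v₂) : k₁ = k₂ := by
  obtain ⟨p, q, hpq, hp, hq⟩ := exists_adj_mem_not_mem latticeGraph_preconnected
    (subLL_subset_subLC (mem_subLL_self hu₁)) (not_mem_subLC_self hh hu₁ hv₁)
  have hk₁ := (subLC_boundary_edge hh hu₁ hp hq hpq).2.1
  rw [heq] at hp hq
  have hk₂ := (subLC_boundary_edge hh hu₂ hp hq hpq).2.1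
  omega

lemma biConnected_subLC (hh : IsLatticeHHF d h) (hu : h u ≤ k) (hv : k < h v) :
    BiConnected d (subLC d h k u v) := by
  have huA : u ∈ subLC d h k u v := subLL_subset_subLC (mem_subLL_self hu)
  have hvA := not_mem_subLC_self hh hu hv
  refine ⟨Set.nonempty_iff_ne_empty.1 ⟨u, huA⟩, fun hA => hvA (hA ▸ trivial), ?_, ?_⟩
  · exact SimpleGraph.connected_iff _ |>.2 ⟨compl_compIn_compl_preconnected
      latticeGraph_preconnected compIn_preconnected (mem_subLL_self hu), ⟨⟨u, huA⟩⟩⟩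
  · rw [ConnectedIn, subLC, compl_compl]
    exact SimpleGraph.connected_iff _ |>.2 ⟨compIn_preconnected, ⟨⟨v, not_not.1 hvA⟩⟩⟩

lemma IsSublevelComponent.biConnected (hh : IsLatticeHHF d h) {A : Set (Fin d → ℤ)}
    (hA : IsSublevelComponent d h A) : BiConnected d A := by
  obtain ⟨u, v, k, hu, hv, rfl⟩ := hA
  exact biConnected_subLC hh hu hv

lemma IsSublevelComponent.boundaryDisjoint (hh : IsLatticeHHF d h) {A B : Set (Fin d → ℤ)}
    (hA : IsSublevelComponent d h A) (hB : IsSublevelComponent d h B) (hne : A ≠ B) :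
    BoundaryDisjoint d A B := by
  obtain ⟨u₁, v₁, k₁, hu₁, -, rfl⟩ := hA
  obtain ⟨u₂, v₂, k₂, hu₂, -, rfl⟩ := hB
  refine ⟨Set.eq_empty_of_forall_notMem ?_, ?_⟩
  · rintro ⟨p, q⟩ ⟨⟨hpq, hA⟩, -, hB⟩
    rcases hA with ⟨hp₁, hq₁⟩ | ⟨hq₁, hp₁⟩ <;> rcases hB with ⟨hp₂, hq₂⟩ | ⟨hq₂, hp₂⟩
    · exact hne (subLC_eq_of_touch hh hu₁ hu₂ hp₁ hp₂ hq₁ hq₂ hpq hpq hq₁ hq₂)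
    · have := subLC_boundary_edge hh hu₁ hp₁ hq₁ hpq
      have := subLC_boundary_edge hh hu₂ hq₂ hp₂ hpq.symm
      omega
    · have := subLC_boundary_edge hh hu₁ hq₁ hp₁ hpq.symm
      have := subLC_boundary_edge hh hu₂ hp₂ hq₂ hpq
      omega
    · exact hne (subLC_eq_of_touch hh hu₁ hu₂ hq₁ hq₂ hp₁ hp₂ hpq.symm hpq.symm hp₁ hp₂)
  · rintro ⟨v₀₀, v₀₁, v₁₁, v₁₀, ⟨-, hadj₁, hadj₂, -⟩, ⟨h₀₀, h₀₀'⟩, ⟨h₀₁, -⟩, ⟨h₁₁, h₁₁'⟩, ⟨-, h₁₀'⟩⟩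
    exact hne (subLC_eq_of_touch hh hu₁ hu₂ h₁₁ h₁₁' h₀₁ h₁₀' hadj₁.symm hadj₂ h₀₀ h₀₀')

lemma subLC_translate {x : Fin d → ℤ} {c : ℤ} (hx : ∀ w, h (w + x) = h w + c) :
    (· + x) '' subLC d h k u v = subLC d h (k + c) (u + x) (v + x) := by
  have hlevel : (· + x) '' {w | h w ≠ k + 1} = {w | h w ≠ k + c + 1} := by
    ext w
    have := hx (w + -x)
    rw [neg_add_cancel_right] at this
    simp only [Set.image_add_right, Set.mem_preimage, Set.mem_ofPred_eq]
    omega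
  have hLL : (· + x) '' subLL d h k u = subLL d h (k + c) (u + x) := by
    rw [subLL, subLL, ← hlevel]
    exact (compIn_image_iso (translateIso x)).symm
  have hcompl := fun s => Set.image_compl_eq (f := (· + x)) (s := s) (Equiv.addRight x).bijective
  rw [subLC, subLC, hcompl, ← hLL, ← hcompl (subLL d h k u)]
  exact congrArg compl (compIn_image_iso (translateIso x)).symm

end HeightFunction

section QuasiPeriodic

variable {d n : ℕ} {m : Fin d → ℤ} {h : (Fin d → ℤ) → ℤ} {x : Fin d → ℤ}

/-- The increment of a quasi-periodic function with slope `m` from the block of `0` to the block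
`⌊w / n⌋` of `w`. -/
def tilt (n : ℕ) (m w : Fin d → ℤ) : ℤ := ∑ i, m i * (w i / n)

lemma tilt_zero : tilt n m 0 = 0 := by simp [tilt]

lemma add_single_mul_eq (hper : ∀ v i, h (v + Pi.single i (n : ℤ)) = h v + m i)
    (w : Fin d → ℤ) (i : Fin d) (t : ℤ) : h (w + Pi.single i (n * t)) = h w + m i * t := by
  induction t using Int.induction_on with
  | zero => simp
  | succ t ih => rw [mul_add, mul_one, Pi.single_add, ← add_assoc, hper, ih]; ring
  | pred t ih =>
    have := hper (w + Pi.single i ((n : ℤ) * (-t - 1))) i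
    rw [add_assoc, ← Pi.single_add, show (n : ℤ) * (-t - 1) + n = n * -t by ring, ih] at this
    linarith

lemma add_eq_add_tilt (hper : ∀ v i, h (v + Pi.single i (n : ℤ)) = h v + m i)
    (hx : ∀ i, (n : ℤ) ∣ x i) (w : Fin d → ℤ) : h (w + x) = h w + tilt n m x := by
  classical
  have key : ∀ s : Finset (Fin d),
      h (w + ∑ i ∈ s, Pi.single i (x i)) = h w + ∑ i ∈ s, m i * (x i / n) := by
    intro s
    induction s using Finset.induction_on with
    | empty => simp
    | insert j s hj ih =>
      have e : w + ∑ i ∈ insert j s, Pi.single i (x i) =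
          w + ∑ i ∈ s, Pi.single i (x i) + Pi.single j (n * (x j / n)) := by
        rw [Int.mul_ediv_cancel' (hx j), Finset.sum_insert hj]
        abel
      rw [e, add_single_mul_eq hper, ih, Finset.sum_insert hj]
      ring
  simpa [Finset.univ_sum_single, tilt] using key Finset.univ

lemma tilt_add_single (w : Fin d → ℤ) (j : Fin d) (t : ℤ) :
    tilt n m (w + Pi.single j t) = tilt n m w + m j * ((w j + t) / n - w j / n) := by
  rw [← sub_eq_iff_eq_add', tilt, tilt, ← Finset.sum_sub_distrib, Finset.sum_eq_single j]
  · simp only [Pi.add_apply, Pi.single_eq_same]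
    ring
  · intro i _ hi
    simp [Pi.single_eq_of_ne hi]
  · simp

lemma tilt_add_period (hn : n ≠ 0) (v : Fin d → ℤ) (i : Fin d) :
    tilt n m (v + Pi.single i (n : ℤ)) = tilt n m v + m i := by
  rw [tilt_add_single, Int.add_ediv_of_dvd_right dvd_rfl, Int.ediv_self (by exact_mod_cast hn)]
  ring

lemma tilt_add (hn : n ≠ 0) (hx : ∀ i, (n : ℤ) ∣ x i) (w : Fin d → ℤ) :
    tilt n m (w + x) = tilt n m w + tilt n m x :=
  add_eq_add_tilt (tilt_add_period hn) hx w

lemma tilt_single (hn : n ≠ 0) (i : Fin d) (t : ℤ) : tilt n m (Pi.single i (n * t)) = m i * t := by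
  simpa [tilt_zero] using add_single_mul_eq (tilt_add_period (m := m) hn) 0 i t

lemma tilt_neg (w : Fin d → ℤ) : tilt n (-m) w = -tilt n m w := by
  simp [tilt, Finset.sum_neg_distrib]

lemma exists_abs_sub_tilt_le (hper : ∀ v i, h (v + Pi.single i (n : ℤ)) = h v + m i)
    (hn : 0 < n) : ∃ M, ∀ w, |h w - tilt n m w| ≤ M := by
  have hbox : (Set.univ.pi fun _ : Fin d => Set.Ico (0 : ℤ) n).Finite :=
    Set.Finite.pi fun _ => Set.finite_Ico _ _
  obtain ⟨M, hM⟩ := (hbox.image fun r => |h r|).bddAbove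
  refine ⟨M, fun w => ?_⟩
  have hdecomp : w = (fun i => w i % n) + fun i => n * (w i / n) := by
    funext i
    simp [Int.emod_add_mul_ediv]
  have htilt : tilt n m (fun i => n * (w i / n)) = tilt n m w := by
    simp only [tilt, Int.mul_ediv_cancel_left _ (show (n : ℤ) ≠ 0 by positivity)]
  have hw := add_eq_add_tilt hper (fun i => dvd_mul_right (n : ℤ) (w i / n)) (fun i => w i % n)
  rw [← hdecomp, htilt] at hw
  rw [hw, add_sub_cancel_right]
  exact hM ⟨_, fun i _ => ⟨Int.emod_nonneg _ (by positivity),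
    Int.emod_lt_of_pos _ (by positivity)⟩, rfl⟩

lemma ediv_add_one_sub_ediv_mem (hn : 0 < n) (a : ℤ) :
    0 ≤ (a + 1) / n - a / n ∧ (a + 1) / n - a / n ≤ 1 := by
  have hn' : (0 : ℤ) < n := by exact_mod_cast hn
  have h₁ := Int.ediv_le_ediv hn' (show a ≤ a + 1 by omega)
  have h₂ := Int.ediv_le_ediv hn' (show a + 1 ≤ a + n by omega)
  rw [Int.add_ediv_of_dvd_right dvd_rfl, Int.ediv_self hn'.ne'] at h₂
  omega

end QuasiPeriodic

section HalfSpace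

variable {d n : ℕ} {m : Fin d → ℤ} {S : Set (Fin d → ℤ)} {i₀ : Fin d} {s : ℤ}

lemma reflTransGen_add_single_mul (hs : s = 1 ∨ s = -1)
    (hdrift : ∀ w ∈ S, w + Pi.single i₀ s ∈ S) {w : Fin d → ℤ} (hw : w ∈ S) (N : ℕ) :
    ReflTransGen (AdjIn (latticeGraph d) S) w (w + Pi.single i₀ (N * s)) := by
  induction N with
  | zero => simpa using ReflTransGen.refl
  | succ N ih =>
    have hmem := mem_of_reflTransGen_adjIn ih hw
    have e : w + Pi.single i₀ ((N + 1 : ℕ) * s) = w + Pi.single i₀ (N * s) + Pi.single i₀ s := by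
      push_cast
      rw [add_one_mul, Pi.single_add, add_assoc]
    rw [e]
    exact ih.tail ⟨adj_add_single _ _ hs, hmem, hdrift _ hmem⟩

lemma reflTransGen_of_eq_of_ne (hs : s = 1 ∨ s = -1) (hdrift : ∀ w ∈ S, w + Pi.single i₀ s ∈ S)
    {w z : Fin d → ℤ} (hw : w ∈ S) (hz : z ∈ S) (hwz : ∀ j ≠ i₀, z j = w j) :
    ReflTransGen (AdjIn (latticeGraph d) S) w z := by
  set c := (z i₀ - w i₀) * s
  have hmeet : w + Pi.single i₀ (c.toNat * s) = z + Pi.single i₀ ((-c).toNat * s) := by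
    funext i
    by_cases hi : i = i₀
    · subst hi
      simp only [Pi.add_apply, Pi.single_eq_same, c]
      rcases hs with rfl | rfl <;> omega
    · simp [Pi.single_eq_of_ne hi, hwz i hi]
  have hw_ray := reflTransGen_add_single_mul hs hdrift hw c.toNat
  rw [hmeet] at hw_ray
  exact hw_ray.trans (symm_of _ (reflTransGen_add_single_mul hs hdrift hz (-c).toNat))

/-- Walk laterally towards the target, drifting first whenever needed, then meet it on a common
drift ray. -/
lemma induce_preconnected_of_drift (hs : s = 1 ∨ s = -1)
    (hdrift : ∀ w ∈ S, w + Pi.single i₀ s ∈ S)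
    (hside : ∀ w ∈ S, ∀ j (σ : ℤ), (σ = 1 ∨ σ = -1) →
      ∃ N : ℕ, w + Pi.single i₀ (N * s) + Pi.single j σ ∈ S) :
    ((latticeGraph d).induce S).Preconnected := by
  refine induce_preconnected_iff.2 fun w₀ hw₀ z hz => ?_
  let D : (Fin d → ℤ) → ℕ := fun w => ∑ j ∈ Finset.univ.erase i₀, (z j - w j).natAbs
  suffices ∀ L, ∀ w ∈ S, D w = L → ReflTransGen (AdjIn (latticeGraph d) S) w z from
    this _ w₀ hw₀ rfl
  intro L
  induction L using Nat.strong_induction_on with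
  | _ L ih =>
  rintro w hw rfl
  by_cases hD : ∃ j ∈ Finset.univ.erase i₀, z j ≠ w j
  · obtain ⟨j, hj, hzw⟩ := hD
    have hji₀ : j ≠ i₀ := Finset.ne_of_mem_erase hj
    set σ : ℤ := if w j < z j then 1 else -1 with hσ_def
    have hσ : σ = 1 ∨ σ = -1 := by rw [hσ_def]; split_ifs <;> simp
    obtain ⟨N, hN⟩ := hside w hw j σ hσ
    set w' := w + Pi.single i₀ (N * s) + Pi.single j σ with hw'
    have hw'j : (z j - w' j).natAbs < (z j - w j).natAbs := by
      simp only [hw', Pi.add_apply, Pi.single_eq_same, Pi.single_eq_of_ne hji₀, hσ_def]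
      split_ifs <;> omega
    have hw'i : ∀ i ∈ Finset.univ.erase i₀, (z i - w' i).natAbs ≤ (z i - w i).natAbs := by
      intro i hi
      by_cases hij : i = j
      · exact hij ▸ hw'j.le
      · simp [hw', Pi.single_eq_of_ne hij, Pi.single_eq_of_ne (Finset.ne_of_mem_erase hi)]
    have hray := reflTransGen_add_single_mul hs hdrift hw N
    exact (hray.tail ⟨adj_add_single _ _ hσ, mem_of_reflTransGen_adjIn hray hw, hN⟩).trans
      (ih _ (Finset.sum_lt_sum hw'i ⟨j, hj, hw'j⟩) w' hN rfl)
  · push Not at hD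
    exact reflTransGen_of_eq_of_ne hs hdrift hw hz fun j hj =>
      hD j (Finset.mem_erase.2 ⟨hj, Finset.mem_univ _⟩)

lemma tilt_add_single_le (hn : 0 < n) (w : Fin d → ℤ) (j : Fin d) {σ : ℤ} (hσ : σ = 1 ∨ σ = -1) :
    tilt n m (w + Pi.single j σ) ≤ tilt n m w + |m j| := by
  rw [tilt_add_single]
  have hδ : -1 ≤ (w j + σ) / n - w j / n ∧ (w j + σ) / n - w j / n ≤ 1 := by
    rcases hσ with rfl | rfl
    · have := ediv_add_one_sub_ediv_mem hn (w j)
      omega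
    · have := ediv_add_one_sub_ediv_mem hn (w j + -1)
      rw [neg_add_cancel_right] at this
      omega
  nlinarith [mul_nonneg (show 0 ≤ 1 + ((w j + σ) / n - w j / n) by omega)
      (show 0 ≤ |m j| - m j by linarith [le_abs_self (m j)]),
    mul_nonneg (show 0 ≤ 1 - ((w j + σ) / n - w j / n) by omega)
      (show 0 ≤ |m j| + m j by linarith [neg_le_abs (m j)])]

lemma tilt_add_single_neg_sign_le (hn : 0 < n) (w : Fin d → ℤ) :
    tilt n m (w + Pi.single i₀ (-(m i₀).sign)) ≤ tilt n m w := by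
  rw [tilt_add_single]
  rcases lt_trichotomy (m i₀) 0 with hneg | hzero | hpos
  · have := ediv_add_one_sub_ediv_mem hn (w i₀)
    rw [Int.sign_eq_neg_one_of_neg hneg, neg_neg]
    nlinarith
  · simp [hzero]
  · have := ediv_add_one_sub_ediv_mem hn (w i₀ + -1)
    rw [neg_add_cancel_right] at this
    rw [Int.sign_eq_one_of_pos hpos]
    nlinarith

lemma induce_preconnected_tilt_le (hn : 0 < n) (hm : m i₀ ≠ 0) (B : ℤ) :
    ((latticeGraph d).induce {w | tilt n m w ≤ B}).Preconnected := by
  have hs : -(m i₀).sign = 1 ∨ -(m i₀).sign = -1 := by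
    rcases hm.lt_or_gt with hneg | hpos
    · simp [Int.sign_eq_neg_one_of_neg hneg]
    · simp [Int.sign_eq_one_of_pos hpos]
  refine induce_preconnected_of_drift (i₀ := i₀) hs
    (fun w (hw : tilt n m w ≤ B) => (tilt_add_single_neg_sign_le hn w).trans hw)
    (fun w (hw : tilt n m w ≤ B) j σ hσ => ⟨n * (m j).natAbs, show tilt n m _ ≤ B from ?_⟩)
  -- drifting `n |m j|` steps lowers `tilt` by `|m i₀| |m j| ≥ |m j|`, enough for a lateral step
  have hdrift : ((n * (m j).natAbs : ℕ) : ℤ) * -(m i₀).sign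
      = n * ((m j).natAbs * -(m i₀).sign) := by push_cast; ring
  have hslope : m i₀ * ((m j).natAbs * -(m i₀).sign) = -(|m j| * |m i₀|) := by
    rw [Int.natCast_natAbs, ← Int.natCast_natAbs (m i₀), ← Int.mul_sign_self]
    ring
  have hlat := tilt_add_single_le (m := m) hn
    (w + Pi.single i₀ (n * ((m j).natAbs * -(m i₀).sign))) j hσ
  rw [add_single_mul_eq (tilt_add_period hn.ne'), hslope] at hlat
  rw [hdrift]
  nlinarith [abs_pos.2 hm, abs_nonneg (m j)]

lemma induce_preconnected_le_tilt (hn : 0 < n) (hm : m i₀ ≠ 0) (B : ℤ) :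
    ((latticeGraph d).induce {w | B ≤ tilt n m w}).Preconnected := by
  have : {w | B ≤ tilt n m w} = {w | tilt n (-m) w ≤ -B} := by
    ext w
    simp only [Set.mem_ofPred_eq, tilt_neg]
    omega
  rw [this]
  exact induce_preconnected_tilt_le hn (by simpa using hm) (-B)

end HalfSpace

section LevelComponents

variable {d n : ℕ} {m : Fin d → ℤ} {h : (Fin d → ℤ) → ℤ} {M k k₁ k₂ : ℤ} {i₀ : Fin d}
  {u v u₁ v₁ u₂ v₂ x : Fin d → ℤ}

lemma height_le_of_tilt_le (hM : ∀ w, |h w - tilt n m w| ≤ M) (hu : tilt n m u ≤ k - M) :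
    h u ≤ k := by
  have := (abs_le.1 (hM u)).2
  omega

lemma lt_height_of_le_tilt (hM : ∀ w, |h w - tilt n m w| ≤ M) (hv : k + M + 1 ≤ tilt n m v) :
    k < h v := by
  have := (abs_le.1 (hM v)).1
  omega

lemma subset_subLL_of_tilt_le (hM : ∀ w, |h w - tilt n m w| ≤ M) (hn : 0 < n) (hm : m i₀ ≠ 0)
    (hu : tilt n m u ≤ k - M) : {w | tilt n m w ≤ k - M} ⊆ subLL d h k u :=
  subset_compIn (induce_preconnected_tilt_le hn hm _)
    (fun w hw => show h w ≠ k + 1 by have := height_le_of_tilt_le hM hw; omega) hu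

lemma subset_compIn_of_le_tilt (hh : IsLatticeHHF d h) (hM : ∀ w, |h w - tilt n m w| ≤ M)
    (hn : 0 < n) (hm : m i₀ ≠ 0) (hu : h u ≤ k) (hv : k + M + 1 ≤ tilt n m v) :
    {w | k + M + 1 ≤ tilt n m w} ⊆ compIn (latticeGraph d) (subLL d h k u)ᶜ v :=
  subset_compIn (induce_preconnected_le_tilt hn hm _)
    (fun _ hw hwL => (height_le_of_mem_subLL hh hu hwL).not_gt (lt_height_of_le_tilt hM hw)) hv

lemma subLC_eq_of_tilt (hh : IsLatticeHHF d h) (hM : ∀ w, |h w - tilt n m w| ≤ M) (hn : 0 < n)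
    (hm : m i₀ ≠ 0) (hu₁ : tilt n m u₁ ≤ k - M) (hu₂ : tilt n m u₂ ≤ k - M)
    (hv₁ : k + M + 1 ≤ tilt n m v₁) (hv₂ : k + M + 1 ≤ tilt n m v₂) :
    subLC d h k u₁ v₁ = subLC d h k u₂ v₂ :=
  subLC_eq_of_mem_of_not_mem (subset_subLL_of_tilt_le hM hn hm hu₁ hu₂)
    (mem_subLL_self (height_le_of_tilt_le hM hu₂))
    (not_not.2 (subset_compIn_of_le_tilt hh hM hn hm (height_le_of_tilt_le hM hu₁) hv₁ hv₂))
    (not_mem_subLC_self hh (height_le_of_tilt_le hM hu₂) (lt_height_of_le_tilt hM hv₂))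

def lowAnchor (n : ℕ) (M : ℤ) (i₀ : Fin d) (k : ℤ) : Fin d → ℤ := Pi.single i₀ (n * -|k - M|)

def highAnchor (n : ℕ) (M : ℤ) (i₀ : Fin d) (k : ℤ) : Fin d → ℤ := Pi.single i₀ (n * |k + M + 1|)

lemma tilt_lowAnchor_le (hn : 0 < n) (hm : 0 < m i₀) : tilt n m (lowAnchor n M i₀ k) ≤ k - M := by
  rw [lowAnchor, tilt_single hn.ne']
  nlinarith [abs_nonneg (k - M), neg_abs_le (k - M)]

lemma le_tilt_highAnchor (hn : 0 < n) (hm : 0 < m i₀) :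
    k + M + 1 ≤ tilt n m (highAnchor n M i₀ k) := by
  rw [highAnchor, tilt_single hn.ne']
  nlinarith [abs_nonneg (k + M + 1), le_abs_self (k + M + 1)]

/-- The sublevel component at level `k` separating the far side `tilt ≪ k` from the far side
`tilt ≫ k`; by `subLC_eq_levelComp` any deep enough anchors give it. -/
def levelComp (n : ℕ) (h : (Fin d → ℤ) → ℤ) (M : ℤ) (i₀ : Fin d) (k : ℤ) : Set (Fin d → ℤ) :=
  subLC d h k (lowAnchor n M i₀ k) (highAnchor n M i₀ k)

lemma subLC_eq_levelComp (hh : IsLatticeHHF d h) (hM : ∀ w, |h w - tilt n m w| ≤ M) (hn : 0 < n)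
    (hm : 0 < m i₀) (hu : tilt n m u ≤ k - M) (hv : k + M + 1 ≤ tilt n m v) :
    subLC d h k u v = levelComp n h M i₀ k :=
  subLC_eq_of_tilt hh hM hn hm.ne' hu (tilt_lowAnchor_le hn hm) hv (le_tilt_highAnchor hn hm)

lemma isSublevelComponent_levelComp (hM : ∀ w, |h w - tilt n m w| ≤ M) (hn : 0 < n)
    (hm : 0 < m i₀) : IsSublevelComponent d h (levelComp n h M i₀ k) :=
  ⟨_, _, k, height_le_of_tilt_le hM (tilt_lowAnchor_le hn hm),
    lt_height_of_le_tilt hM (le_tilt_highAnchor hn hm), rfl⟩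

lemma levelComp_mono (hh : IsLatticeHHF d h) (hM : ∀ w, |h w - tilt n m w| ≤ M) (hn : 0 < n)
    (hm : 0 < m i₀) (hk : k₁ ≤ k₂) : levelComp n h M i₀ k₁ ⊆ levelComp n h M i₀ k₂ := by
  have hu := tilt_lowAnchor_le (k := k₁) (M := M) hn hm
  have hv := le_tilt_highAnchor (k := k₂) (M := M) hn hm
  rw [← subLC_eq_levelComp (k := k₁) hh hM hn hm hu (by linarith),
    ← subLC_eq_levelComp (u := lowAnchor n M i₀ k₁) hh hM hn hm (by linarith) hv]
  exact subLC_mono hh (height_le_of_tilt_le hM hu) hk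

lemma levelComp_injective (hh : IsLatticeHHF d h) (hM : ∀ w, |h w - tilt n m w| ≤ M) (hn : 0 < n)
    (hm : 0 < m i₀) : Function.Injective (levelComp n h M i₀) := fun _ _ heq =>
  subLC_level_eq hh (height_le_of_tilt_le hM (tilt_lowAnchor_le hn hm))
    (lt_height_of_le_tilt hM (le_tilt_highAnchor hn hm))
    (height_le_of_tilt_le hM (tilt_lowAnchor_le hn hm)) heq

lemma image_add_levelComp (hh : IsLatticeHHF d h)
    (hper : ∀ v i, h (v + Pi.single i (n : ℤ)) = h v + m i) (hM : ∀ w, |h w - tilt n m w| ≤ M)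
    (hn : 0 < n) (hm : 0 < m i₀) (hx : ∀ i, (n : ℤ) ∣ x i) :
    (· + x) '' levelComp n h M i₀ k = levelComp n h M i₀ (k + tilt n m x) := by
  rw [levelComp, subLC_translate (add_eq_add_tilt hper hx)]
  apply subLC_eq_levelComp hh hM hn hm <;> rw [tilt_add hn.ne' hx]
  · linarith [tilt_lowAnchor_le (k := k) (M := M) hn hm]
  · linarith [le_tilt_highAnchor (k := k) (M := M) hn hm]

lemma image_add_single_levelComp (hh : IsLatticeHHF d h)
    (hper : ∀ v i, h (v + Pi.single i (n : ℤ)) = h v + m i) (hM : ∀ w, |h w - tilt n m w| ≤ M)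
    (hn : 0 < n) (hm : 0 < m i₀) :
    (· + Pi.single i₀ (n : ℤ)) '' levelComp n h M i₀ k = levelComp n h M i₀ (k + m i₀) := by
  have htilt : tilt n m (Pi.single i₀ (n : ℤ)) = m i₀ := by
    simpa [tilt_zero] using tilt_add_period (m := m) hn.ne' 0 i₀
  rw [image_add_levelComp hh hper hM hn hm fun i => ?_, htilt]
  by_cases hi : i = i₀ <;> simp [hi]

lemma zero_mem_levelComp (hh : IsLatticeHHF d h) (hM : ∀ w, |h w - tilt n m w| ≤ M) (hn : 0 < n)
    (hm : 0 < m i₀) (hk : M ≤ k) : 0 ∈ levelComp n h M i₀ k := by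
  have h0 : tilt n m 0 ≤ k - M := by rw [tilt_zero]; omega
  rw [← subLC_eq_levelComp hh hM hn hm h0 (le_tilt_highAnchor hn hm)]
  exact subLL_subset_subLC (mem_subLL_self (height_le_of_tilt_le hM h0))

lemma zero_not_mem_levelComp (hh : IsLatticeHHF d h) (hM : ∀ w, |h w - tilt n m w| ≤ M)
    (hn : 0 < n) (hm : 0 < m i₀) (hk : k + M + 1 ≤ 0) : 0 ∉ levelComp n h M i₀ k := by
  have h0 : k + M + 1 ≤ tilt n m 0 := by rw [tilt_zero]; omega
  rw [← subLC_eq_levelComp hh hM hn hm (tilt_lowAnchor_le hn hm) h0]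
  exact not_mem_subLC_self hh (height_le_of_tilt_le hM (tilt_lowAnchor_le hn hm))
    (lt_height_of_le_tilt hM h0)

lemma single_not_mem_levelComp (hh : IsLatticeHHF d h)
    (hper : ∀ v i, h (v + Pi.single i (n : ℤ)) = h v + m i) (hM : ∀ w, |h w - tilt n m w| ≤ M)
    (hn : 0 < n) (hm : 0 < m i₀) (hk : 0 ∉ levelComp n h M i₀ (k - m i₀)) :
    Pi.single i₀ (n : ℤ) ∉ levelComp n h M i₀ k := by
  rw [← sub_add_cancel k (m i₀), ← image_add_single_levelComp hh hper hM hn hm]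
  rintro ⟨w, hw, hw0⟩
  exact hk (add_eq_right.1 hw0 ▸ hw)

lemma typeZero_levelComp (hh : IsLatticeHHF d h)
    (hper : ∀ v i, h (v + Pi.single i (n : ℤ)) = h v + m i) (hM : ∀ w, |h w - tilt n m w| ≤ M)
    (hn : 0 < n) (hm : 0 < m i₀) : TypeZero n d (levelComp n h M i₀ k) := by
  have hcomp (j : ℤ) := isSublevelComponent_levelComp (k := j) (i₀ := i₀) hM hn hm
  have hmem {W} (hW : W ∈ translates n d (levelComp n h M i₀ k)) : ∃ j, W = levelComp n h M i₀ j :=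
    have ⟨_, hx, hW⟩ := hW
    ⟨_, hW.trans (image_add_levelComp hh hper hM hn hm hx)⟩
  refine ⟨⟨(hcomp k).biConnected hh, ?_⟩, ?_, ?_⟩
  · rintro _ hU₁ _ hU₂ hne
    obtain ⟨j₁, rfl⟩ := hmem hU₁
    obtain ⟨j₂, rfl⟩ := hmem hU₂
    exact (hcomp j₁).boundaryDisjoint hh (hcomp j₂) hne
  · refine ⟨levelComp n h M i₀ k, ⟨0, fun _ => dvd_zero _, by simp⟩, levelComp n h M i₀ (k + m i₀),
      ⟨Pi.single i₀ n, fun i => ?_, (image_add_single_levelComp hh hper hM hn hm).symm⟩,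
      fun heq => ?_⟩
    · by_cases hi : i = i₀ <;> simp [hi]
    · have := levelComp_injective hh hM hn hm heq
      omega
  · rintro _ hA _ hB
    obtain ⟨j₁, rfl⟩ := hmem hA
    obtain ⟨j₂, rfl⟩ := hmem hB
    exact (le_total j₁ j₂).imp (levelComp_mono hh hM hn hm) (levelComp_mono hh hM hn hm)

end LevelComponents

end P3C

theorem stmt18_general (n d : ℕ) (hd : 0 < d)
    (m : Fin d → ℤ) (hm : 0 < m ⟨0, hd⟩)
    (h : (Fin d → ℤ) → ℤ) (hh : P3C.IsQP n d m h) :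
    ∃ A : Set (Fin d → ℤ), P3C.IsSublevelComponent d h A ∧
      (0 : Fin d → ℤ) ∈ A ∧ (Pi.single (⟨0, hd⟩ : Fin d) (n : ℤ)) ∉ A ∧
      P3C.TypeZero n d A := by
  obtain ⟨⟨hhf, -⟩, hper⟩ := hh
  have hn : 0 < n := by
    refine Nat.pos_of_ne_zero fun hn => ?_
    have := hper 0 ⟨0, hd⟩
    simp only [hn, Nat.cast_zero, Pi.single_zero, add_zero] at this
    omega
  obtain ⟨M, hM⟩ := P3C.exists_abs_sub_tilt_le hper hn
  obtain ⟨k, hk, hleast⟩ := Int.exists_least_of_bdd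
    (P := fun k => 0 ∈ P3C.levelComp n h M ⟨0, hd⟩ k)
    ⟨-M - 1, fun j hj => not_lt.1 fun hj' =>
      P3C.zero_not_mem_levelComp hhf hM hn hm (by omega) hj⟩
    ⟨M, P3C.zero_mem_levelComp hhf hM hn hm le_rfl⟩
  refine ⟨_, P3C.isSublevelComponent_levelComp hM hn hm, hk,
    P3C.single_not_mem_levelComp hhf hper hM hn hm fun h0 => ?_,
    P3C.typeZero_levelComp hhf hper hM hn hm⟩
  have := hleast _ h0
  omega

theorem stmt18 (n d : ℕ) (hn : Even n) (hn2 : 2 ≤ n) (hd : 0 < d)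
    (m : Fin d → ℤ) (hm : 0 < m ⟨0, hd⟩)
    (h : (Fin d → ℤ) → ℤ) (hh : P3C.IsQP n d m h) :
    ∃ A : Set (Fin d → ℤ), P3C.IsSublevelComponent d h A ∧
      (0 : Fin d → ℤ) ∈ A ∧ (Pi.single (⟨0, hd⟩ : Fin d) (n : ℤ)) ∉ A ∧
      P3C.TypeZero n d A :=
  stmt18_general n d hd m hm h hh
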